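/- Let G be a finite simple graph and suppose α_k(G) = ((k−1)/k)·(n − ω(G)) where n = |V(G)|. If x lies on a cycle of G, then α_k(G − x) = α_k(G), ω(G − x) = ω(G) − 1, and G − x also satisfies α_k(G − x) = ((k−1)/k)·(|V(G−x)| − ω(G − x)). -/

import Mathlib

open SimpleGraph

/-- A set `S` is a generalized `k`-independent set in `G` if the induced subgraph `G[S]`
contains no tree on `k` vertices, equivalently every connected component of `G[S]`
has at most `k - 1` vertices. -/
def IsGenKIndep {V : Type*} (G : SimpleGraph V) (k : ℕ) (S : Set V) : Prop :=
  ∀ c : (G.induce S).ConnectedComponent, Nat.card c.supp ≤ k - 1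

/-- The generalized `k`-independence number: the maximum size of a generalized
`k`-independent set. -/
noncomputable def alphaK {V : Type*} (G : SimpleGraph V) (k : ℕ) : ℕ :=
  sSup {m | ∃ S : Set V, IsGenKIndep G k S ∧ S.ncard = m}

/-- The dimension of the cycle space: `|E| - |V| + c(G)` (as a natural number;
note `|E| + c(G) ≥ |V|` always holds). -/
noncomputable def cycleDim {V : Type*} (G : SimpleGraph V) : ℕ :=
  Nat.card G.edgeSet + Nat.card G.ConnectedComponent - Nat.card V

/-- `x` lies on a cycle of `G`. -/
def OnCycle {V : Type*} (G : SimpleGraph V) (x : V) : Prop :=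
  ∃ (u : V) (w : G.Walk u u), w.IsCycle ∧ x ∈ w.support

/-!
Deleting a vertex `x` lowers `|E| + c` by at least one, and by at least two when `x` lies on a
cycle: `G - x` loses the `deg x` edges at `x`, while its components next to `x` (at most
`deg x - 1` of them, since the two cycle neighbours of `x` stay connected in `G - x`) merge into
one. Hence `ω(G - x) ≤ ω(G) - 1`.

Every graph satisfies `α_k(G) ≥ q (n - ω(G))` with `q = (k-1)/k`: delete cycle vertices until a
forest is left, and in a forest split off a minimal set `B` with `|B| ≥ k - 1` that is a union of
components of `G - v` for some `v`; minimality makes `B` itself `k`-independent, and induction on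
`G - (B ∪ {v})` finishes. For a `k`-good `G` the chain
`q (n - 1 - ω(G - x)) ≤ α_k(G - x) ≤ α_k(G) = q (n - ω(G)) ≤ q (n - 1 - ω(G - x))`
therefore consists of equalities.
-/

namespace SimpleGraph

variable {V : Type*} {G : SimpleGraph V}

lemma Reachable.mem_of_adj_closed {U : Set V} (hU : ∀ a ∈ U, ∀ b, G.Adj a b → b ∈ U)
    {a b : V} (h : G.Reachable a b) (ha : a ∈ U) : b ∈ U := by
  obtain ⟨p⟩ := h
  induction p with
  | nil => exact ha
  | cons hadj _ ih => exact ih (hU _ ha _ hadj)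

lemma IsAcyclic.eq_of_adj_of_walk (hG : G.IsAcyclic) {v u y : V} (hu : G.Adj v u)
    (hy : G.Adj v y) (p : G.Walk u y) (hv : v ∉ p.support) : u = y := by
  have h := isBridge_iff_forall_walk_mem_edges.mp (isAcyclic_iff_forall_adj_isBridge.mp hG hy)
    (.cons hu p)
  rw [Walk.edges_cons, List.mem_cons] at h
  rcases h with h | h
  · exact (Sym2.congr_right.mp h).symm
  · exact absurd (p.fst_mem_support_of_mem_edges h) hv

lemma ConnectedComponent.exists_card_supp_le_of_adj_closed [Finite V] {U T : Set V}
    (hUT : U ⊆ T) (hU : ∀ a ∈ U, ∀ b ∈ T, G.Adj a b → b ∈ U) {a : V} (ha : a ∈ U) :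
    ∃ d : (G.induce U).ConnectedComponent,
      Nat.card ((G.induce T).connectedComponentMk ⟨a, hUT ha⟩).supp ≤ Nat.card d.supp := by
  set d := (G.induce U).connectedComponentMk ⟨a, ha⟩
  let ι := G.induceHomOfLE hUT
  refine ⟨d, ?_⟩
  have hsub : ((G.induce T).connectedComponentMk ⟨a, hUT ha⟩).supp ⊆ ι '' d.supp := by
    intro z hz
    refine (ConnectedComponent.exact hz).symm.mem_of_adj_closed ?_ ⟨⟨a, ha⟩, rfl, rfl⟩
    rintro _ ⟨w, hw, rfl⟩ z' hwz'
    have hz' : z'.1 ∈ U := hU _ w.2 _ z'.2 hwz'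
    have hadj : (G.induce U).Adj w ⟨z', hz'⟩ := hwz'
    exact ⟨⟨z', hz'⟩, (d.mem_supp_congr_adj hadj).mp hw, rfl⟩
  exact (Nat.card_mono (Set.toFinite _) hsub).trans (Nat.card_image_le (Set.toFinite _))

end SimpleGraph

lemma OnCycle.exists_walk_between_neighbors {V : Type*} {G : SimpleGraph V} {x : V}
    (hx : OnCycle G x) :
    ∃ u₁ u₂, G.Adj x u₁ ∧ G.Adj x u₂ ∧ u₁ ≠ u₂ ∧ ∃ p : G.Walk u₁ u₂, x ∉ p.support := by
  classical
  obtain ⟨u, c, hc, hxc⟩ := hx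
  have hc' := hc.rotate hxc
  generalize c.rotate x hxc = c' at hc'
  cases c' with
  | nil => exact absurd hc' Walk.not_isCycle_nil
  | cons h p =>
    have hnil : ¬ p.Nil := fun hp => h.ne hp.eq.symm
    refine ⟨_, p.penultimate, h, (p.adj_penultimate hnil).symm, ?_, p.dropLast, ?_⟩
    · simpa [Walk.penultimate_cons_of_not_nil _ _ hnil] using hc'.snd_ne_penultimate
    · have hnodup := ((Walk.cons_isCycle_iff p h).mp hc').1.support_nodup
      rw [← Walk.support_dropLast_concat hnil, List.nodup_append] at hnodup
      exact fun hx => hnodup.2.2 x hx x (List.mem_singleton_self x) rfl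

section DeleteVertex

variable {V : Type*} (G : SimpleGraph V) (x : V)

lemma card_setOf_ne_add_one [Finite V] : Nat.card {y | y ≠ x} + 1 = Nat.card V := by
  rw [← Set.compl_singleton_eq, Nat.card_coe_set_eq, ← Set.ncard_add_ncard_compl {x},
    Set.ncard_singleton, add_comm]

def neighborComponent (y : G.neighborSet x) : (G.induce {y | y ≠ x}).ConnectedComponent :=
  (G.induce {y | y ≠ x}).connectedComponentMk ⟨y, (G.ne_of_adj y.2).symm⟩

variable {G x} in
lemma mem_image_supp_of_map_eq {D : (G.induce {y | y ≠ x}).ConnectedComponent}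
    (hD : D ∉ Set.range (neighborComponent G x)) {w : V}
    (hw : G.connectedComponentMk w = D.map (Embedding.induce _).toHom) :
    w ∈ Subtype.val '' D.supp := by
  induction D using ConnectedComponent.ind with | h b => ?_
  rw [ConnectedComponent.map_mk] at hw
  refine (ConnectedComponent.exact hw).symm.mem_of_adj_closed ?_ ⟨b, rfl, rfl⟩
  rintro _ ⟨z, hz, rfl⟩ w hzw
  by_cases hwx : w = x
  · subst hwx
    exact absurd ⟨⟨z, hzw.symm⟩, hz⟩ hD
  · exact ⟨⟨w, hwx⟩, ConnectedComponent.mem_supp_of_adj_mem_supp _ hz hzw, rfl⟩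

lemma card_connectedComponent_deleteVertex_add_one_le [Finite V] :
    Nat.card (G.induce {y | y ≠ x}).ConnectedComponent + 1 ≤
      Nat.card G.ConnectedComponent + Nat.card (Set.range (neighborComponent G x)) := by
  classical
  set R := Set.range (neighborComponent G x)
  let φ := ConnectedComponent.map (Embedding.induce {y | y ≠ x} : G.induce _ ↪g G).toHom
  -- `φ` is injective off `R`, and misses the component of `x` there.
  let f : Option ↥Rᶜ → G.ConnectedComponent := fun o => o.elim (G.connectedComponentMk x) (φ ·)
  have hf : f.Injective := by
    rintro (_ | ⟨D, hD⟩) (_ | ⟨D', hD'⟩) h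
    · rfl
    · obtain ⟨z, -, hz⟩ := mem_image_supp_of_map_eq hD' h
      exact absurd hz z.2
    · obtain ⟨z, -, hz⟩ := mem_image_supp_of_map_eq hD h.symm
      exact absurd hz z.2
    · refine congrArg some (Subtype.ext ?_)
      induction D' using ConnectedComponent.ind with | h b' => ?_
      obtain ⟨z, hz, hzb⟩ :=
        mem_image_supp_of_map_eq hD ((ConnectedComponent.map_mk _ _).symm.trans h.symm)
      exact ((ConnectedComponent.mem_supp_iff _ _).mp hz).symm.trans
        (congrArg _ (Subtype.ext hzb))
  have hsplit :
      Nat.card R + Nat.card ↥Rᶜ = Nat.card (G.induce {y | y ≠ x}).ConnectedComponent := by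
    rw [← Nat.card_sum]
    exact Nat.card_congr (Equiv.Set.sumCompl R)
  have := Nat.card_le_card_of_injective f hf
  rw [Finite.card_option] at this
  omega

lemma card_edgeSet_eq_add_card_neighborSet [Finite V] :
    Nat.card G.edgeSet =
      Nat.card (G.induce {y | y ≠ x}).edgeSet + Nat.card (G.neighborSet x) := by
  classical
  have := Fintype.ofFinite V
  have h := G.card_edgeFinset_induce_compl_singleton x
  have hdeg := G.degree_le_card_edgeFinset x
  rw [card_edgeFinset_deleteIncidenceSet] at h
  simp only [edgeFinset_card, ← Nat.card_eq_fintype_card, ← card_neighborSet_eq_degree]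
    at h hdeg
  rw [Set.compl_singleton_eq] at h
  omega

variable {G x} in
lemma OnCycle.card_range_neighborComponent_lt [Finite V] (hx : OnCycle G x) :
    Nat.card (Set.range (neighborComponent G x)) < Nat.card (G.neighborSet x) := by
  obtain ⟨u₁, u₂, h₁, h₂, hne, p, hp⟩ := hx.exists_walk_between_neighbors
  have hnotinj : ¬ (neighborComponent G x).Injective := fun hinj =>
    hne (congrArg Subtype.val (@hinj ⟨u₁, h₁⟩ ⟨u₂, h₂⟩ (ConnectedComponent.sound
      (p.induce {y | y ≠ x} fun v hv hvx => hp (hvx ▸ hv)).reachable)))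
  by_contra! hle
  exact hnotinj (Subtype.val_injective.comp
    (Set.rangeFactorization_surjective.bijective_of_nat_card_le hle).injective)

lemma card_edgeSet_add_card_connectedComponent_deleteVertex_lt [Finite V] :
    Nat.card (G.induce {y | y ≠ x}).edgeSet +
        Nat.card (G.induce {y | y ≠ x}).ConnectedComponent <
      Nat.card G.edgeSet + Nat.card G.ConnectedComponent := by
  have := card_edgeSet_eq_add_card_neighborSet G x
  have := card_connectedComponent_deleteVertex_add_one_le G x
  have := Finite.card_range_le (neighborComponent G x)
  omega

variable {G x} in
lemma OnCycle.card_edgeSet_add_card_connectedComponent_deleteVertex_add_two_le [Finite V]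
    (hx : OnCycle G x) :
    Nat.card (G.induce {y | y ≠ x}).edgeSet +
        Nat.card (G.induce {y | y ≠ x}).ConnectedComponent + 2 ≤
      Nat.card G.edgeSet + Nat.card G.ConnectedComponent := by
  have := card_edgeSet_eq_add_card_neighborSet G x
  have := card_connectedComponent_deleteVertex_add_one_le G x
  have := hx.card_range_neighborComponent_lt
  omega

end DeleteVertex

theorem card_le_card_edgeSet_add_card_connectedComponent {V : Type*} [Finite V]
    (G : SimpleGraph V) : Nat.card V ≤ Nat.card G.edgeSet + Nat.card G.ConnectedComponent := by
  induction hn : Nat.card V using Nat.strong_induction_on generalizing V with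
  | _ n ih =>
  rcases isEmpty_or_nonempty V with hV | ⟨⟨x⟩⟩
  · simp [← hn]
  have hcard := card_setOf_ne_add_one x
  have := ih _ (by omega) (G.induce {y | y ≠ x}) rfl
  have := card_edgeSet_add_card_connectedComponent_deleteVertex_lt G x
  omega

lemma OnCycle.cycleDim_deleteVertex_add_one_le {V : Type*} [Finite V] {G : SimpleGraph V}
    {x : V} (hx : OnCycle G x) : cycleDim (G.induce {y | y ≠ x}) + 1 ≤ cycleDim G := by
  have := hx.card_edgeSet_add_card_connectedComponent_deleteVertex_add_two_le
  have := card_le_card_edgeSet_add_card_connectedComponent (G.induce {y | y ≠ x})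
  have := card_setOf_ne_add_one x
  unfold cycleDim
  omega

section GenKIndep

variable {V : Type*} {G : SimpleGraph V} {k : ℕ}

lemma isGenKIndep_of_ncard_le [Finite V] {S : Set V} (h : S.ncard ≤ k - 1) :
    IsGenKIndep G k S := fun _ =>
  (Finite.card_subtype_le _).trans ((Nat.card_coe_set_eq S).trans_le h)

lemma IsGenKIndep.union [Finite V] {S B : Set V} (hS : IsGenKIndep G k S)
    (hB : IsGenKIndep G k B) (hSB : ∀ a ∈ S, ∀ b ∈ B, ¬ G.Adj a b) :
    IsGenKIndep G k (S ∪ B) := by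
  intro c
  induction c using ConnectedComponent.ind with | h a => ?_
  obtain ⟨a, haS | haB⟩ := a
  · obtain ⟨d, hd⟩ := ConnectedComponent.exists_card_supp_le_of_adj_closed
      Set.subset_union_left (fun a ha b hb hab => hb.resolve_right (hSB a ha b · hab)) haS
    exact hd.trans (hS d)
  · obtain ⟨d, hd⟩ := ConnectedComponent.exists_card_supp_le_of_adj_closed
      Set.subset_union_right (fun b hb a ha hba => ha.resolve_left (hSB a · b hb hba.symm)) haB
    exact hd.trans (hB d)

variable (G k) in
lemma bddAbove_ncard_isGenKIndep [Finite V] :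
    BddAbove {m | ∃ S : Set V, IsGenKIndep G k S ∧ S.ncard = m} :=
  ⟨Nat.card V, by rintro _ ⟨S, -, rfl⟩; exact Set.ncard_le_card S⟩

lemma IsGenKIndep.ncard_le_alphaK [Finite V] {S : Set V} (h : IsGenKIndep G k S) :
    S.ncard ≤ alphaK G k :=
  le_csSup (bddAbove_ncard_isGenKIndep G k) ⟨S, h, rfl⟩

variable (G k)

lemma exists_isGenKIndep_ncard_eq_alphaK [Finite V] :
    ∃ S : Set V, IsGenKIndep G k S ∧ S.ncard = alphaK G k :=
  Nat.sSup_mem (s := {m | ∃ S : Set V, IsGenKIndep G k S ∧ S.ncard = m})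
    ⟨0, ∅, isGenKIndep_of_ncard_le (by simp), Set.ncard_empty V⟩ (bddAbove_ncard_isGenKIndep G k)

lemma exists_isGenKIndep_subset_ncard_eq_alphaK_induce [Finite V] (T : Set V) :
    ∃ S ⊆ T, IsGenKIndep G k S ∧ S.ncard = alphaK (G.induce T) k := by
  obtain ⟨S₀, hS₀, hcard⟩ := exists_isGenKIndep_ncard_eq_alphaK (G.induce T) k
  let f : (G.induce T).induce S₀ ↪g G := (Embedding.induce T).comp (Embedding.induce S₀)
  let e := (Embedding.isoInduceRange f).symm
  refine ⟨Set.range f, ?_, fun c => ?_, ?_⟩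
  · rintro _ ⟨z, rfl⟩
    exact z.1.2
  · exact (Nat.card_congr (c.isoEquivSupp e)).trans_le (hS₀ _)
  · rw [Set.ncard_range_of_injective f.injective, Nat.card_coe_set_eq, hcard]

lemma alphaK_induce_le [Finite V] (T : Set V) : alphaK (G.induce T) k ≤ alphaK G k := by
  obtain ⟨S, -, hS, hcard⟩ := exists_isGenKIndep_subset_ncard_eq_alphaK_induce G k T
  exact hcard ▸ hS.ncard_le_alphaK

end GenKIndep

section Forest

variable {V : Type*} {G : SimpleGraph V} {k : ℕ}

/-- `B` is a union of connected components of `G - v`. -/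
def IsPendantAt (G : SimpleGraph V) (v : V) (B : Set V) : Prop :=
  v ∉ B ∧ ∀ ⦃b y⦄, b ∈ B → G.Adj b y → y ∈ insert v B

lemma IsPendantAt.alphaK_induce_compl_add_ncard_le [Finite V] {v : V} {B : Set V}
    (hB : IsPendantAt G v B) (hBk : IsGenKIndep G k B) :
    alphaK (G.induce (insert v B)ᶜ) k + B.ncard ≤ alphaK G k := by
  obtain ⟨S, hST, hS, hcard⟩ :=
    exists_isGenKIndep_subset_ncard_eq_alphaK_induce G k (insert v B)ᶜ
  have hSB : ∀ a ∈ S, ∀ b ∈ B, ¬ G.Adj a b := fun a ha b hb hab => hST ha (hB.2 hb hab.symm)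
  have hdisj : Disjoint S B := Set.disjoint_left.mpr fun a ha hb => hST ha (Or.inr hb)
  rw [← hcard, ← Set.ncard_union_eq hdisj]
  exact (hS.union hBk hSB).ncard_le_alphaK

lemma SimpleGraph.IsAcyclic.exists_isPendantAt_isGenKIndep [Finite V] (hG : G.IsAcyclic)
    {v : V} {B : Set V} (hB : IsPendantAt G v B) (hBk : k - 1 ≤ B.ncard) :
    ∃ v' B', IsPendantAt G v' B' ∧ k - 1 ≤ B'.ncard ∧ IsGenKIndep G k B' := by
  induction hn : B.ncard using Nat.strong_induction_on generalizing v B with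
  | _ n ih =>
  by_cases hind : IsGenKIndep G k B
  · exact ⟨v, B, hB, hBk, hind⟩
  obtain ⟨c, hc⟩ : ∃ c : (G.induce B).ConnectedComponent, k - 1 < Nat.card c.supp := by
    simpa [IsGenKIndep] using hind
  set C : Set V := Subtype.val '' c.supp
  have hCcard : C.ncard = Nat.card c.supp := by
    rw [Set.ncard_image_of_injective _ Subtype.val_injective, Nat.card_coe_set_eq]
  -- Two neighbours of `v` in the connected set `C ⊆ B` would close a cycle through `v`.
  obtain ⟨u, huC, hu⟩ : ∃ u ∈ C, ∀ y ∈ C, G.Adj v y → y = u := by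
    by_cases h : ∃ u ∈ C, G.Adj v u
    · obtain ⟨_, ⟨u, hu, rfl⟩, hvu⟩ := h
      refine ⟨u, ⟨u, hu, rfl⟩, ?_⟩
      rintro _ ⟨y, hy, rfl⟩ hvy
      obtain ⟨p⟩ := c.reachable_of_mem_supp hu hy
      have hpB : ∀ z ∈ (p.map (Embedding.induce B).toHom).support, z ∈ B := by
        intro z hz
        rw [Walk.support_map, List.mem_map] at hz
        obtain ⟨z, -, rfl⟩ := hz
        exact z.2
      exact (hG.eq_of_adj_of_walk hvu hvy (p.map (Embedding.induce B).toHom)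
        fun hv => hB.1 (hpB v hv)).symm
    · obtain ⟨u, hu⟩ : C.Nonempty := by
        rw [← Set.ncard_pos]
        omega
      exact ⟨u, hu, fun y hy hvy => absurd ⟨y, hy, hvy⟩ h⟩
  have hC' : IsPendantAt G u (C \ {u}) := by
    refine ⟨fun h => h.2 rfl, ?_⟩
    rintro _ y ⟨⟨b, hb, rfl⟩, hbu⟩ hby
    rcases hB.2 b.2 hby with rfl | hyB
    · exact absurd (hu _ ⟨b, hb, rfl⟩ hby.symm) hbu
    · by_cases hyu : y = u
      · exact Or.inl hyu
      · exact Or.inr ⟨⟨⟨y, hyB⟩, c.mem_supp_of_adj_mem_supp hb hby, rfl⟩, hyu⟩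
  have hcard' := Set.ncard_sdiff_singleton_add_one huC
  have hCB : C.ncard ≤ n := hn ▸ Set.ncard_le_ncard (fun _ ⟨z, _, hz⟩ => hz ▸ z.2)
  exact ih _ (by omega) hC' (by omega) rfl

theorem SimpleGraph.IsAcyclic.mul_card_le_mul_alphaK [Finite V] (hG : G.IsAcyclic) (k : ℕ) :
    (k - 1) * Nat.card V ≤ k * alphaK G k := by
  induction hn : Nat.card V using Nat.strong_induction_on generalizing V with
  | _ n ih =>
  rcases k with _ | m
  · simp
  rw [Nat.add_sub_cancel]
  by_cases hsmall : n ≤ m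
  · have h := (isGenKIndep_of_ncard_le (G := G) (k := m + 1) (S := Set.univ)
      (by rwa [Set.ncard_univ, hn, Nat.add_sub_cancel])).ncard_le_alphaK
    rw [Set.ncard_univ, hn] at h
    nlinarith
  obtain ⟨v⟩ : Nonempty V := (Nat.card_pos_iff.mp (by omega)).1
  have hv : IsPendantAt G v {v}ᶜ :=
    ⟨fun h => h rfl, fun _ y _ _ => Set.mem_insert_iff.mpr (em _)⟩
  obtain ⟨w, B, hB, hBk, hBind⟩ := hG.exists_isPendantAt_isGenKIndep (k := m + 1) hv (by
    have := card_setOf_ne_add_one v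
    rw [← Set.compl_singleton_eq, Nat.card_coe_set_eq] at this
    omega)
  have hT : B.ncard + 1 + Nat.card ↥(insert w B)ᶜ = n := by
    rw [Nat.card_coe_set_eq, ← Set.ncard_insert_of_notMem hB.1, Set.ncard_add_ncard_compl, hn]
  have hrest := ih _ (by omega) (hG.induce (insert w B)ᶜ) rfl
  have hstep := hB.alphaK_induce_compl_add_ncard_le hBind
  rw [Nat.add_sub_cancel] at hBk hrest
  -- `(k - 1)(|B| + 1) ≤ k |B|` because `|B| ≥ k - 1`.
  nlinarith

end Forest

section LowerBound

variable {V : Type*}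

theorem mul_card_sub_cycleDim_le_mul_alphaK [Finite V] (G : SimpleGraph V) (k : ℕ) :
    (k - 1) * (Nat.card V - cycleDim G) ≤ k * alphaK G k := by
  induction hn : Nat.card V using Nat.strong_induction_on generalizing V with
  | _ n ih =>
  by_cases hcyc : ∃ x, OnCycle G x
  · obtain ⟨x, hx⟩ := hcyc
    have hcard := card_setOf_ne_add_one x
    have hω := hx.cycleDim_deleteVertex_add_one_le
    calc (k - 1) * (n - cycleDim G)
        ≤ (k - 1) * (Nat.card {y | y ≠ x} - cycleDim (G.induce {y | y ≠ x})) :=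
          Nat.mul_le_mul_left _ (by omega)
      _ ≤ k * alphaK (G.induce {y | y ≠ x}) k := ih _ (by omega) _ rfl
      _ ≤ k * alphaK G k := Nat.mul_le_mul_left _ (alphaK_induce_le G k _)
  · have hG : G.IsAcyclic := fun v c hc => hcyc ⟨v, v, c, hc, c.start_mem_support⟩
    calc (k - 1) * (n - cycleDim G) ≤ (k - 1) * n := Nat.mul_le_mul_left _ (Nat.sub_le _ _)
      _ ≤ k * alphaK G k := hn ▸ hG.mul_card_le_mul_alphaK k

theorem div_mul_card_sub_cycleDim_le_alphaK [Finite V] (G : SimpleGraph V) (k : ℕ) :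
    ((k : ℚ) - 1) / k * (Nat.card V - cycleDim G) ≤ alphaK G k := by
  rcases Nat.eq_zero_or_pos k with rfl | hk
  · simp
  have hkq : (0 : ℚ) < k := by exact_mod_cast hk
  have hsub : (Nat.card V : ℚ) - cycleDim G ≤ ((Nat.card V - cycleDim G : ℕ) : ℚ) := by
    rcases le_total (cycleDim G) (Nat.card V) with h | h
    · rw [Nat.cast_sub h]
    · rw [Nat.sub_eq_zero_of_le h, Nat.cast_zero, sub_nonpos]
      exact_mod_cast h
  rw [div_mul_eq_mul_div, div_le_iff₀ hkq]
  calc ((k : ℚ) - 1) * (Nat.card V - cycleDim G)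
      ≤ ((k : ℚ) - 1) * ((Nat.card V - cycleDim G : ℕ) : ℚ) :=
        mul_le_mul_of_nonneg_left hsub (sub_nonneg.mpr (by exact_mod_cast hk))
    _ = (((k - 1) * (Nat.card V - cycleDim G) : ℕ) : ℚ) := by
      push_cast [Nat.cast_sub hk]
      ring
    _ ≤ ((k * alphaK G k : ℕ) : ℚ) := by exact_mod_cast mul_card_sub_cycleDim_le_mul_alphaK G k
    _ = alphaK G k * k := by push_cast; ring

end LowerBound

/-- If `G` is `k`-good (i.e. `α_k(G) = ((k-1)/k)(n - ω(G))`) and `x` lies on a cycle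
of `G`, then `α_k(G - x) = α_k(G)`, `ω(G - x) = ω(G) - 1`, and `G - x` is `k`-good. -/
theorem kGood_deleteVertex {V : Type*} [Fintype V] (G : SimpleGraph V) (k : ℕ)
    (hk : 2 ≤ k)
    (hgood : (alphaK G k : ℚ) = ((k : ℚ) - 1) / k * ((Nat.card V : ℚ) - cycleDim G))
    (x : V) (hx : OnCycle G x) :
    alphaK (G.induce {y : V | y ≠ x}) k = alphaK G k ∧
    cycleDim (G.induce {y : V | y ≠ x}) = cycleDim G - 1 ∧
    (alphaK (G.induce {y : V | y ≠ x}) k : ℚ) =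
      ((k : ℚ) - 1) / k * ((Nat.card {y : V // y ≠ x} : ℚ) -
        cycleDim (G.induce {y : V | y ≠ x})) := by
  set G' := G.induce {y : V | y ≠ x}
  set c := ((k : ℚ) - 1) / k
  have hk' : (2 : ℚ) ≤ k := by exact_mod_cast hk
  have hc : 0 < c := div_pos (by linarith) (by linarith)
  have hn : (Nat.card {y : V // y ≠ x} : ℚ) = Nat.card V - 1 := by
    rw [eq_sub_iff_add_eq]
    exact_mod_cast card_setOf_ne_add_one x
  have hlow : c * (Nat.card V - 1 - cycleDim G') ≤ alphaK G' k := by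
    rw [← hn]
    exact div_mul_card_sub_cycleDim_le_alphaK G' k
  have hα : (alphaK G' k : ℚ) ≤ alphaK G k := by exact_mod_cast alphaK_induce_le G k _
  have hω : (cycleDim G' : ℚ) + 1 ≤ cycleDim G := by
    exact_mod_cast hx.cycleDim_deleteVertex_add_one_le
  have hωeq : (cycleDim G' : ℚ) + 1 = cycleDim G :=
    le_antisymm hω (le_of_mul_le_mul_left (by linarith) hc)
  have hαeq : (alphaK G' k : ℚ) = alphaK G k := by
    refine le_antisymm hα ?_
    rw [hgood, ← hωeq]
    linarith
  have hωeq' : cycleDim G' + 1 = cycleDim G := by exact_mod_cast hωeq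
  refine ⟨by exact_mod_cast hαeq, by omega, ?_⟩
  rw [hn, hαeq, hgood, ← hωeq]
  ring
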